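/- arXiv:2409.10853 — 4 statements merged into one kernel-verified Lean document; each statement's English description precedes it below -/
import Mathlib

section
/- (Jiang–Seiver) Let ε and c be positive reals with ε ≤ 1. There exist constants K ≥ 1 and c' > 0 depending only on c and ε, and an integer N depending only on c and ε, such that for every n ≥ N: if G is an n-vertex simple graph with e(G) ≥ c·n^{1+ε}, then G contains a subgraph G' on n' ≥ n^{ε/4} vertices such that Δ(G') ≤ K·δ(G') and e(G') ≥ c'·n'^{1+ε}. -/
/-- Number of edges of a simple graph. -/
noncomputable def edgeCount {V : Type*} (G : SimpleGraph V) : ℕ := Nat.card G.edgeSet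

/-- Average degree `2e(G)/|V(G)|` of a simple graph. -/
noncomputable def avgDeg {V : Type*} (G : SimpleGraph V) : ℝ :=
  2 * (edgeCount G : ℝ) / (Nat.card V : ℝ)

/-- Degree of a vertex. -/
noncomputable def deg {V : Type*} (G : SimpleGraph V) (v : V) : ℕ := Nat.card (G.neighborSet v)

/-- Minimum degree. -/
noncomputable def minDeg {V : Type*} [Fintype V] (G : SimpleGraph V) : ℕ :=
  sInf (Set.range (deg G))

/-- Maximum degree. -/
noncomputable def maxDeg {V : Type*} [Fintype V] (G : SimpleGraph V) : ℕ :=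
  Finset.univ.sup (deg G)

open Classical in
/-- Adjacency matrix over the reals. -/
noncomputable def adjMat {V : Type*} [Fintype V] (G : SimpleGraph V) : Matrix V V ℝ :=
  G.adjMatrix ℝ

/-- Spectral radius: the largest eigenvalue of the adjacency matrix. -/
noncomputable def specRad {V : Type*} [Fintype V] (G : SimpleGraph V) : ℝ :=
  sSup {μ : ℝ | ∃ x : V → ℝ, x ≠ 0 ∧ (adjMat G).mulVec x = μ • x}

/-- `H` is (isomorphic to) a subgraph of `G`, i.e. `H` is obtained from `G` by
deleting vertices and/or edges. -/
def IsSubgraphOf {α β : Type*} (H : SimpleGraph α) (G : SimpleGraph β) : Prop :=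
  ∃ f : α ↪ β, ∀ u v, H.Adj u v → G.Adj (f u) (f v)

/-- `G` contains no member of the family `𝓗` as a subgraph. -/
def HFree {n : ℕ} (𝓗 : Set (Σ m : ℕ, SimpleGraph (Fin m))) (G : SimpleGraph (Fin n)) : Prop :=
  ∀ H ∈ 𝓗, ¬ IsSubgraphOf H.2 G

/-- Turán number: maximum number of edges of an `n`-vertex `𝓗`-free graph. -/
noncomputable def exNum (𝓗 : Set (Σ m : ℕ, SimpleGraph (Fin m))) (n : ℕ) : ℕ :=
  sSup {k : ℕ | ∃ G : SimpleGraph (Fin n), HFree 𝓗 G ∧ edgeCount G = k}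

/-- Spectral Turán number: maximum spectral radius of an `n`-vertex `𝓗`-free graph. -/
noncomputable def spexNum (𝓗 : Set (Σ m : ℕ, SimpleGraph (Fin m))) (n : ℕ) : ℝ :=
  sSup {μ : ℝ | ∃ G : SimpleGraph (Fin n), HFree 𝓗 G ∧ specRad G = μ}

/-!
Erdős–Simonovits regularisation. Write `D(S)` for twice the number of edges inside `S`, `d(S)` for
`D(S) / |S|`, and `β = ε / 2`. A vertex set `S₀` maximising `D(S) / |S| ^ (1 + β)` has ratio
`ρ ≥ 2 c n ^ β` (compare with the whole vertex set), and by maximality every set of size `s` has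
`D ≤ ρ s ^ (1 + β)`. Cutting `S₀` into pieces of size `b`, a set of `b` vertices therefore sends
at most `(|S₀| / b) ρ (2b) ^ (1 + β)` edges into `S₀`. By Markov the vertices of degree at least
`K d(S₀)`, `K = 2 · 16 ^ (1 / β)`, form such a set with `b ≤ |S₀| / K`, so deleting them costs at
most a quarter of `D(S₀)`. Trimming vertices of degree below `d(S₀) / 8` costs another quarter and
leaves a subgraph with all degrees in `[d(S₀) / 8, K d(S₀)]`. Its order is at least its minimum
degree `d(S₀) / 8 ≥ ρ / 8 ≥ (c / 4) n ^ β ≥ n ^ (ε / 4)`, and it keeps `D ≥ ρ |S₀| ^ (1 + β) / 2`.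
-/

open Finset

lemma mul_two_mul_rpow_one_add_le {β b m : ℝ} (hβ : 0 < β) (hb : 0 ≤ b)
    (hbm : 16 ^ (1 / β) * (2 * b) ≤ m) :
    m * (2 * b) ^ (1 + β) ≤ b * m ^ (1 + β) / 8 := by
  have hm : 0 ≤ m := le_trans (by positivity) hbm
  have hpow : 16 * (2 * b) ^ β ≤ m ^ β := by
    have h := Real.rpow_le_rpow (by positivity) hbm hβ.le
    rwa [Real.mul_rpow (by positivity) (by positivity), ← Real.rpow_mul (by norm_num),
      one_div_mul_cancel hβ.ne', Real.rpow_one] at h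
  rw [Real.rpow_add' (by positivity) (by positivity), Real.rpow_add' hm (by positivity),
    Real.rpow_one, Real.rpow_one]
  nlinarith [mul_le_mul_of_nonneg_left hpow (by positivity : 0 ≤ m * b)]

lemma rpow_div_four_le_mul_rpow_div_two {ε c x : ℝ} (hε : 0 < ε) (hc : 0 < c)
    (hx : (4 / c) ^ (4 / ε) ≤ x) : x ^ (ε / 4) ≤ c / 4 * x ^ (ε / 2) := by
  have hx0 : 0 ≤ x := (by positivity : (0 : ℝ) ≤ (4 / c) ^ (4 / ε)).trans hx
  have h : 4 / c ≤ x ^ (ε / 4) := by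
    have := Real.rpow_le_rpow (by positivity) hx (by positivity : 0 ≤ ε / 4)
    rwa [← Real.rpow_mul (by positivity), show 4 / ε * (ε / 4) = 1 by field_simp,
      Real.rpow_one] at this
  have hsplit : x ^ (ε / 2) = x ^ (ε / 4) * x ^ (ε / 4) := by
    rw [← Real.rpow_add' hx0 (by positivity)]; ring_nf
  have hc4 : 1 ≤ c / 4 * x ^ (ε / 4) := by
    rw [div_le_iff₀' hc] at h; linarith
  rw [hsplit]
  nlinarith [Real.rpow_nonneg hx0 (ε / 4)]

lemma deg_eq_degree {V : Type*} (G : SimpleGraph V) (v : V) [Fintype (G.neighborSet v)] :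
    deg G v = G.degree v := by
  rw [deg, Nat.card_eq_fintype_card, SimpleGraph.card_neighborSet_eq_degree]

lemma edgeCount_eq_card_edgeFinset {V : Type*} (G : SimpleGraph V) [Fintype G.edgeSet] :
    edgeCount G = #G.edgeFinset := by
  rw [edgeCount, Nat.card_eq_fintype_card, SimpleGraph.edgeFinset_card]

lemma exists_deg_eq_minDeg {W : Type*} [Fintype W] [Nonempty W] (H : SimpleGraph W) :
    ∃ w, deg H w = minDeg H :=
  Nat.sInf_mem (Set.range_nonempty _)

lemma exists_deg_eq_maxDeg {W : Type*} [Fintype W] [Nonempty W] (H : SimpleGraph W) :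
    ∃ w, deg H w = maxDeg H := by
  obtain ⟨w, -, hw⟩ := exists_mem_eq_sup univ univ_nonempty (deg H)
  exact ⟨w, hw.symm⟩

namespace SimpleGraph

variable {V : Type*} [Fintype V] [DecidableEq V] (G : SimpleGraph V) [DecidableRel G.Adj]

def degIn (S : Finset V) (v : V) : ℕ := #(G.neighborFinset v ∩ S)

/-- Twice the number of edges of `G[S]`. -/
def degSum (S : Finset V) : ℕ := ∑ v ∈ S, G.degIn S v

variable {G}

lemma degIn_mono {A B : Finset V} (h : A ⊆ B) (v : V) : G.degIn A v ≤ G.degIn B v :=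
  card_le_card (inter_subset_inter_left h)

lemma degIn_union_le (A B : Finset V) (v : V) :
    G.degIn (A ∪ B) v ≤ G.degIn A v + G.degIn B v := by
  rw [degIn, inter_union_distrib_left]
  exact card_union_le _ _

lemma degIn_le_card (S : Finset V) (v : V) : G.degIn S v ≤ #S :=
  card_le_card inter_subset_right

lemma sum_degIn_comm (A B : Finset V) :
    ∑ v ∈ A, G.degIn B v = ∑ u ∈ B, G.degIn A u := by
  have hfilter : ∀ v (S : Finset V), G.neighborFinset v ∩ S = S.filter (G.Adj v) := by
    intro v S; ext; simp [and_comm]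
  simp only [degIn, hfilter, card_filter]
  rw [sum_comm]
  simp only [G.adj_comm]

lemma sum_degIn_le_degSum {A S : Finset V} (h : A ⊆ S) : ∑ v ∈ A, G.degIn S v ≤ G.degSum S :=
  sum_le_sum_of_subset h

lemma degSum_le_degSum_sdiff_add (S B : Finset V) :
    G.degSum S ≤ G.degSum (S \ B) + 2 * ∑ v ∈ B, G.degIn S v := by
  have hsplit : ∀ v, G.degIn S v ≤ G.degIn (S \ B) v + G.degIn B v := fun v =>
    (degIn_mono (by simp) v).trans (degIn_union_le _ _ v)
  calc G.degSum S = ∑ v ∈ S ∩ B, G.degIn S v + ∑ v ∈ S \ B, G.degIn S v :=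
        (sum_inter_add_sum_sdiff _ _ _).symm
    _ ≤ ∑ v ∈ B, G.degIn S v + ∑ v ∈ S \ B, (G.degIn (S \ B) v + G.degIn B v) :=
        add_le_add (sum_le_sum_of_subset inter_subset_right) (sum_le_sum fun v _ => hsplit v)
    _ = ∑ v ∈ B, G.degIn S v + G.degSum (S \ B) + ∑ v ∈ B, G.degIn (S \ B) v := by
        rw [sum_add_distrib, sum_degIn_comm (S \ B) B, degSum, add_assoc]
    _ ≤ G.degSum (S \ B) + 2 * ∑ v ∈ B, G.degIn S v := by
        have := sum_le_sum fun v (_ : v ∈ B) =>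
          degIn_mono (G := G) (sdiff_subset (s := S) (t := B)) v
        omega

lemma degSum_univ : G.degSum univ = 2 * #G.edgeFinset := by
  simp only [degSum, degIn, inter_univ, card_neighborFinset_eq_degree,
    sum_degrees_eq_twice_card_edges]

lemma nonempty_of_degSum_pos {S : Finset V} (h : 0 < G.degSum S) : S.Nonempty :=
  nonempty_of_ne_empty (by rintro rfl; exact h.ne' rfl)

lemma sum_degIn_union_le_of_card_le {α ρ : ℝ} (hα : 0 ≤ α)
    (hbound : ∀ S : Finset V, S.Nonempty → (G.degSum S : ℝ) ≤ ρ * #S ^ α)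
    {B Y : Finset V} (hB : B.Nonempty) (hY : #Y ≤ #B) :
    (∑ v ∈ B, G.degIn (B ∪ Y) v : ℝ) ≤ ρ * (2 * #B) ^ α := by
  have hρ : 0 ≤ ρ := by
    have hpow : (0 : ℝ) < #B ^ α := Real.rpow_pos_of_pos (by exact_mod_cast hB.card_pos) α
    exact nonneg_of_mul_nonneg_left ((Nat.cast_nonneg _).trans (hbound B hB)) hpow
  calc (∑ v ∈ B, G.degIn (B ∪ Y) v : ℝ) ≤ G.degSum (B ∪ Y) := by
        exact_mod_cast sum_degIn_le_degSum subset_union_left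
    _ ≤ ρ * #(B ∪ Y) ^ α := hbound _ (hB.mono subset_union_left)
    _ ≤ ρ * (2 * #B) ^ α := by
        gcongr
        exact_mod_cast (card_union_le B Y).trans (by omega)

/-- Cut `Y` into pieces of size `#B`: each piece together with `B` spans a degree sum of at most
`ρ * (2 * #B) ^ α`. -/
lemma card_mul_sum_degIn_union_le {α ρ : ℝ} (hα : 0 ≤ α)
    (hbound : ∀ S : Finset V, S.Nonempty → (G.degSum S : ℝ) ≤ ρ * #S ^ α)
    {B : Finset V} (hB : B.Nonempty) (Y : Finset V) :
    (#B : ℝ) * ∑ v ∈ B, (G.degIn (B ∪ Y) v : ℝ) ≤ (#Y + #B) * (ρ * (2 * #B) ^ α) := by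
  induction hk : #Y using Nat.strong_induction_on generalizing Y with
  | _ k ih =>
  subst hk
  rcases le_or_gt #Y #B with hYB | hBY
  · have hsum := sum_degIn_union_le_of_card_le hα hbound hB hYB
    have hM : 0 ≤ ρ * (2 * #B) ^ α := (by positivity : (0 : ℝ) ≤ _).trans hsum
    calc (#B : ℝ) * ∑ v ∈ B, (G.degIn (B ∪ Y) v : ℝ) ≤ #B * (ρ * (2 * #B) ^ α) := by gcongr
      _ ≤ (#Y + #B) * (ρ * (2 * #B) ^ α) := by gcongr; simp
  · obtain ⟨Y₁, hY₁, hcard⟩ := exists_subset_card_eq hBY.le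
    have hcard₂ : #(Y \ Y₁) = #Y - #B := by rw [card_sdiff_of_subset hY₁, hcard]
    have h₁ := sum_degIn_union_le_of_card_le hα hbound hB hcard.le
    have h₂ := ih #(Y \ Y₁) (by have := hB.card_pos; omega) (Y \ Y₁) rfl
    have hsplit : ∑ v ∈ B, G.degIn (B ∪ Y) v ≤
        ∑ v ∈ B, G.degIn (B ∪ Y₁) v + ∑ v ∈ B, G.degIn (B ∪ (Y \ Y₁)) v := by
      rw [← sum_add_distrib]
      refine sum_le_sum fun v _ => (degIn_mono ?_ v).trans (degIn_union_le _ _ v)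
      intro x
      simp only [mem_union, mem_sdiff]
      tauto
    have hcard₂R : (#(Y \ Y₁) : ℝ) = #Y - #B := by rw [hcard₂, Nat.cast_sub hBY.le]
    rw [hcard₂R, sub_add_cancel] at h₂
    calc (#B : ℝ) * ∑ v ∈ B, (G.degIn (B ∪ Y) v : ℝ)
        ≤ #B * ∑ v ∈ B, (G.degIn (B ∪ Y₁) v : ℝ) +
            #B * ∑ v ∈ B, (G.degIn (B ∪ (Y \ Y₁)) v : ℝ) := by
          rw [← mul_add]; gcongr; exact_mod_cast hsplit
      _ ≤ #B * (ρ * (2 * #B) ^ α) + #Y * (ρ * (2 * #B) ^ α) := by gcongr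
      _ = (#Y + #B) * (ρ * (2 * #B) ^ α) := by ring

/-- Take `T` maximising `degSum T - 2 θ #T`: deleting a vertex of degree below `θ` would
increase this quantity. -/
lemma exists_subset_forall_le_degIn (S : Finset V) (θ : ℝ) :
    ∃ T ⊆ S, (∀ v ∈ T, θ ≤ G.degIn T v) ∧
      (G.degSum S : ℝ) - 2 * θ * #S ≤ G.degSum T - 2 * θ * #T := by
  obtain ⟨T, hT, hmax⟩ := exists_max_image S.powerset
    (fun T => (G.degSum T : ℝ) - 2 * θ * #T) ⟨S, mem_powerset_self S⟩
  refine ⟨T, mem_powerset.mp hT, fun v hv => ?_, hmax S (mem_powerset_self S)⟩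
  by_contra! hlt
  have herase := hmax (T.erase v)
    (mem_powerset.mpr ((erase_subset v T).trans (mem_powerset.mp hT)))
  have hdeg : (G.degSum T : ℝ) ≤ G.degSum (T.erase v) + 2 * G.degIn T v := by
    have := degSum_le_degSum_sdiff_add (G := G) T {v}
    rw [sdiff_singleton_eq_erase, sum_singleton] at this
    exact_mod_cast this
  have hcard : (#(T.erase v) : ℝ) = #T - 1 := by
    rw [card_erase_of_mem hv, Nat.cast_sub (card_pos.mpr ⟨v, hv⟩), Nat.cast_one]
  rw [hcard] at herase
  linarith

/-- By Markov there are at most `#S₀ / (2 · 16 ^ (1 / β))` vertices of degree at least `t`, and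
by the maximality of `S₀` so small a set sends few edges into `S₀`. -/
lemma sum_degIn_filter_le {β ρ t : ℝ} {S₀ : Finset V} (hβ : 0 < β)
    (hbound : ∀ S : Finset V, S.Nonempty → (G.degSum S : ℝ) ≤ ρ * #S ^ (1 + β))
    (hS₀ : (G.degSum S₀ : ℝ) = ρ * #S₀ ^ (1 + β)) (hpos : 0 < G.degSum S₀)
    (ht : 2 * 16 ^ (1 / β) * G.degSum S₀ ≤ t * #S₀) :
    ∑ v ∈ S₀ with t ≤ G.degIn S₀ v, (G.degIn S₀ v : ℝ) ≤ G.degSum S₀ / 8 := by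
  set B := S₀.filter (fun v => t ≤ G.degIn S₀ v)
  have hBS₀ : B ⊆ S₀ := filter_subset _ _
  have hD : (0 : ℝ) < G.degSum S₀ := by exact_mod_cast hpos
  have hS₀ne : S₀.Nonempty := nonempty_of_degSum_pos hpos
  have hm : (0 : ℝ) < #S₀ := by exact_mod_cast hS₀ne.card_pos
  have hρ : 0 < ρ := pos_of_mul_pos_left (hS₀ ▸ hD) (by positivity)
  have ht0 : 0 < t := pos_of_mul_pos_left ((by positivity : (0 : ℝ) < _).trans_le ht) hm.le
  have hsumD : ∑ v ∈ B, (G.degIn S₀ v : ℝ) ≤ G.degSum S₀ := by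
    exact_mod_cast sum_degIn_le_degSum hBS₀
  rcases B.eq_empty_or_nonempty with hB | hB
  · rw [hB, sum_empty]; positivity
  have hb : (0 : ℝ) < #B := by exact_mod_cast hB.card_pos
  have hmarkov : #B * t ≤ (G.degSum S₀ : ℝ) := by
    calc #B * t = ∑ _v ∈ B, t := by rw [sum_const, nsmul_eq_mul]
      _ ≤ ∑ v ∈ B, (G.degIn S₀ v : ℝ) := sum_le_sum fun v hv => (mem_filter.mp hv).2
      _ ≤ _ := hsumD
  have hbm : 16 ^ (1 / β) * (2 * #B) ≤ (#S₀ : ℝ) := by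
    refine le_of_mul_le_mul_right ?_ ht0
    nlinarith [mul_le_mul_of_nonneg_left hmarkov (by positivity : (0 : ℝ) ≤ 2 * 16 ^ (1 / β))]
  have hchunk := card_mul_sum_degIn_union_le (by positivity) hbound hB (S₀ \ B)
  rw [union_sdiff_of_subset hBS₀, card_sdiff_of_subset hBS₀, Nat.cast_sub (card_le_card hBS₀),
    sub_add_cancel] at hchunk
  have harith := mul_two_mul_rpow_one_add_le hβ hb.le hbm
  refine le_of_mul_le_mul_left ?_ hb
  calc (#B : ℝ) * ∑ v ∈ B, (G.degIn S₀ v : ℝ) ≤ ρ * (#S₀ * (2 * #B) ^ (1 + β)) := by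
        linarith
    _ ≤ ρ * (#B * #S₀ ^ (1 + β) / 8) := by gcongr
    _ = #B * (G.degSum S₀ / 8) := by rw [hS₀]; ring

/-- With `8 θ` the average degree of `S₀`, delete the vertices of degree at least
`16 ^ (1 + 1 / β) θ`, then trim to minimum degree `θ`. -/
lemma exists_subset_degIn_bounds {β ρ : ℝ} {S₀ : Finset V} (hβ : 0 < β)
    (hbound : ∀ S : Finset V, S.Nonempty → (G.degSum S : ℝ) ≤ ρ * #S ^ (1 + β))
    (hS₀ : (G.degSum S₀ : ℝ) = ρ * #S₀ ^ (1 + β)) (hpos : 0 < G.degSum S₀) :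
    ∃ T ⊆ S₀, (G.degSum S₀ : ℝ) / 2 ≤ G.degSum T ∧ ∀ v ∈ T,
      (G.degSum S₀ : ℝ) / (8 * #S₀) ≤ G.degIn T v ∧
      (G.degIn T v : ℝ) ≤ 16 ^ (1 + 1 / β) * (G.degSum S₀ / (8 * #S₀)) := by
  set D : ℝ := (G.degSum S₀ : ℝ)
  set θ := D / (8 * #S₀) with hθdef
  have hS₀ne : S₀.Nonempty := nonempty_of_degSum_pos hpos
  have hm : (0 : ℝ) < #S₀ := by exact_mod_cast hS₀ne.card_pos
  have hθ : 0 ≤ θ := by positivity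
  have ht : 2 * 16 ^ (1 / β) * D ≤ 16 ^ (1 + 1 / β) * θ * #S₀ := by
    rw [Real.rpow_add (by norm_num), Real.rpow_one, hθdef]
    field_simp
    linarith
  have hB := sum_degIn_filter_le hβ hbound hS₀ hpos ht
  set B := S₀.filter (fun v => 16 ^ (1 + 1 / β) * θ ≤ G.degIn S₀ v)
  have hS₁ : (G.degSum S₀ : ℝ) ≤ G.degSum (S₀ \ B) + 2 * ∑ v ∈ B, (G.degIn S₀ v : ℝ) := by
    exact_mod_cast degSum_le_degSum_sdiff_add S₀ B
  obtain ⟨T, hT, hmin, htrim⟩ := exists_subset_forall_le_degIn (G := G) (S₀ \ B) θ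
  have hcard : 2 * θ * #(S₀ \ B) ≤ D / 4 := by
    calc 2 * θ * #(S₀ \ B) ≤ 2 * θ * #S₀ := by gcongr; exact sdiff_subset
      _ = D / 4 := by rw [hθdef]; field_simp; ring
  refine ⟨T, hT.trans sdiff_subset, by nlinarith, fun v hv => ⟨hmin v hv, ?_⟩⟩
  have hv' := mem_sdiff.mp (hT hv)
  have hlow : ¬ 16 ^ (1 + 1 / β) * θ ≤ G.degIn S₀ v := fun h => hv'.2 (mem_filter.mpr ⟨hv'.1, h⟩)
  have hmono : (G.degIn T v : ℝ) ≤ G.degIn S₀ v := by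
    exact_mod_cast degIn_mono (hT.trans sdiff_subset) v
  linarith [not_le.mp hlow]

variable (G) in
lemma exists_forall_degSum_div_rpow_le [Nonempty V] (α : ℝ) :
    ∃ S₀ : Finset V, S₀.Nonempty ∧ ∀ S : Finset V, S.Nonempty →
      (G.degSum S : ℝ) / #S ^ α ≤ G.degSum S₀ / #S₀ ^ α := by
  obtain ⟨S₀, hS₀, hmax⟩ := exists_max_image (univ.filter Finset.Nonempty)
    (fun S : Finset V => (G.degSum S : ℝ) / #S ^ α) ⟨univ, by simp⟩
  exact ⟨S₀, (mem_filter.mp hS₀).2, fun S hS => hmax S (by simp [hS])⟩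

theorem exists_almostRegular_subset [Nonempty V] {β c : ℝ} (hβ : 0 < β) (hc : 0 < c)
    (hG : c * (Fintype.card V : ℝ) ^ (1 + 2 * β) ≤ #G.edgeFinset) :
    ∃ (T : Finset V) (θ : ℝ), c / 4 * (Fintype.card V : ℝ) ^ β ≤ θ ∧ T.Nonempty ∧
      (∀ v ∈ T, θ ≤ G.degIn T v ∧ (G.degIn T v : ℝ) ≤ 16 ^ (1 + 1 / β) * θ) ∧
      c * (#T : ℝ) ^ (1 + 2 * β) ≤ G.degSum T := by
  obtain ⟨S₀, hS₀ne, hmax⟩ := G.exists_forall_degSum_div_rpow_le (1 + β)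
  have hn : (0 : ℝ) < Fintype.card V := by exact_mod_cast Fintype.card_pos
  have hm : (0 : ℝ) < #S₀ := by exact_mod_cast hS₀ne.card_pos
  generalize hρ_def : (G.degSum S₀ : ℝ) / #S₀ ^ (1 + β) = ρ at hmax
  have hbound : ∀ S : Finset V, S.Nonempty → (G.degSum S : ℝ) ≤ ρ * #S ^ (1 + β) :=
    fun S hS => (div_le_iff₀ (by have := hS.card_pos; positivity)).mp (hmax S hS)
  have hS₀ : (G.degSum S₀ : ℝ) = ρ * #S₀ ^ (1 + β) := by
    rw [← hρ_def, div_mul_cancel₀ _ (by positivity)]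
  clear hρ_def
  have hρ : 2 * c * (Fintype.card V : ℝ) ^ β ≤ ρ := by
    have huniv := hmax univ univ_nonempty
    rw [degSum_univ, card_univ] at huniv
    calc 2 * c * (Fintype.card V : ℝ) ^ β
        = 2 * (c * (Fintype.card V : ℝ) ^ (1 + 2 * β)) / (Fintype.card V : ℝ) ^ (1 + β) := by
          rw [eq_div_iff (by positivity), mul_assoc, ← Real.rpow_add hn]; ring_nf
      _ ≤ (2 * #G.edgeFinset : ℕ) / (Fintype.card V : ℝ) ^ (1 + β) := by
          gcongr; push_cast; linarith
      _ ≤ ρ := huniv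
  have hρ0 : 0 < ρ := (by positivity : (0 : ℝ) < 2 * c * (Fintype.card V : ℝ) ^ β).trans_le hρ
  have hpos : 0 < G.degSum S₀ := by
    have : (0 : ℝ) < G.degSum S₀ := by rw [hS₀]; positivity
    exact_mod_cast this
  obtain ⟨T, hTS₀, hedge, hdeg⟩ := exists_subset_degIn_bounds hβ hbound hS₀ hpos
  refine ⟨T, _, ?_, ?_, hdeg, ?_⟩
  · calc c / 4 * (Fintype.card V : ℝ) ^ β ≤ ρ / 8 := by linarith
      _ ≤ ρ * #S₀ ^ β / 8 := by
          gcongr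
          exact le_mul_of_one_le_right hρ0.le
            (Real.one_le_rpow (by exact_mod_cast hS₀ne.card_pos) hβ.le)
      _ = G.degSum S₀ / (8 * #S₀) := by
          rw [hS₀, Real.rpow_add hm, Real.rpow_one]; field_simp
  · have hD : (0 : ℝ) < G.degSum S₀ := by exact_mod_cast hpos
    have hT : (0 : ℝ) < G.degSum T := (by positivity : (0 : ℝ) < _).trans_le hedge
    exact nonempty_of_degSum_pos (by exact_mod_cast hT)
  · have hTm : (#T : ℝ) ≤ #S₀ := by exact_mod_cast card_le_card hTS₀
    have hTn : (#T : ℝ) ≤ Fintype.card V := hTm.trans (by exact_mod_cast card_le_univ S₀)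
    calc c * (#T : ℝ) ^ (1 + 2 * β) = c * #T ^ β * #T ^ (1 + β) := by
          rw [mul_assoc, ← Real.rpow_add' (Nat.cast_nonneg _) (by linarith)]; ring_nf
      _ ≤ c * (Fintype.card V : ℝ) ^ β * #S₀ ^ (1 + β) := by gcongr
      _ ≤ ρ / 2 * #S₀ ^ (1 + β) := by gcongr; linarith
      _ = G.degSum S₀ / 2 := by rw [hS₀]; ring
      _ ≤ G.degSum T := hedge

variable (G) in
lemma exists_isSubgraphOf_fin_degIn (T : Finset V) :
    ∃ G' : SimpleGraph (Fin #T), IsSubgraphOf G' G ∧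
      (∀ i, ∃ v ∈ T, deg G' i = G.degIn T v) ∧ 2 * edgeCount G' = G.degSum T := by
  let e : Fin #T ≃ T := T.equivFin.symm
  let φ : Fin #T ↪ V := e.toEmbedding.trans (Function.Embedding.subtype _)
  have hdeg : ∀ i, deg (G.comap φ) i = G.degIn T (φ i) := by
    intro i
    rw [deg, degIn]
    refine (Nat.card_congr ?_).trans (Nat.card_eq_finsetCard (G.neighborFinset (φ i) ∩ T))
    refine (Equiv.ofBijective
      (fun j => ⟨φ j.1, mem_inter.mpr ⟨(mem_neighborFinset _ _ _).mpr j.2, (e j.1).2⟩⟩) ⟨?_, ?_⟩)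
    · intro j₁ j₂ h
      rw [Subtype.mk.injEq] at h
      exact Subtype.ext (φ.injective h)
    · rintro ⟨u, hu⟩
      obtain ⟨hadj, huT⟩ := mem_inter.mp hu
      refine ⟨⟨e.symm ⟨u, huT⟩, ?_⟩, Subtype.ext ?_⟩
      · simpa [φ] using (mem_neighborFinset _ _ _).mp hadj
      · simp [φ]
  refine ⟨G.comap φ, ⟨φ, fun _ _ h => h⟩, fun i => ⟨φ i, (e i).2, hdeg i⟩, ?_⟩
  classical
  rw [edgeCount_eq_card_edgeFinset, ← sum_degrees_eq_twice_card_edges]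
  simp_rw [← deg_eq_degree, hdeg]
  exact (e.sum_comp (fun v => G.degIn T v)).trans (sum_coe_sort T _)

end SimpleGraph

theorem stmt1_general (ε c : ℝ) (hε0 : 0 < ε) (hc : 0 < c) :
    ∃ (K c' : ℝ) (N : ℕ), 1 ≤ K ∧ 0 < c' ∧
      ∀ n : ℕ, N ≤ n → ∀ G : SimpleGraph (Fin n),
        c * (n : ℝ) ^ (1 + ε) ≤ (edgeCount G : ℝ) →
        ∃ (n' : ℕ) (G' : SimpleGraph (Fin n')), IsSubgraphOf G' G ∧
          (n : ℝ) ^ (ε / 4) ≤ (n' : ℝ) ∧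
          (maxDeg G' : ℝ) ≤ K * (minDeg G' : ℝ) ∧
          c' * (n' : ℝ) ^ (1 + ε) ≤ (edgeCount G' : ℝ) := by
  classical
  refine ⟨16 ^ (1 + 1 / (ε / 2)), c / 2, ⌈(4 / c) ^ (4 / ε)⌉₊ + 1,
    Real.one_le_rpow (by norm_num) (by positivity), by positivity, fun n hn G hG => ?_⟩
  have : Nonempty (Fin n) := ⟨⟨0, by omega⟩⟩
  have hexp : 1 + 2 * (ε / 2) = 1 + ε := by ring
  obtain ⟨T, θ, hθ, ⟨v, hv⟩, hdeg, hedge⟩ := G.exists_almostRegular_subset (half_pos hε0) hc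
    (by rwa [hexp, Fintype.card_fin, ← edgeCount_eq_card_edgeFinset])
  rw [Fintype.card_fin] at hθ
  rw [hexp] at hedge
  obtain ⟨G', hG', hdegG', hedgeG'⟩ := G.exists_isSubgraphOf_fin_degIn T
  have : Nonempty (Fin #T) := ⟨⟨0, card_pos.mpr ⟨v, hv⟩⟩⟩
  refine ⟨#T, G', hG', ?_, ?_, ?_⟩
  · have hnN : (4 / c) ^ (4 / ε) ≤ (n : ℝ) :=
      (Nat.le_ceil _).trans (by exact_mod_cast (Nat.le_succ _).trans hn)
    calc (n : ℝ) ^ (ε / 4) ≤ c / 4 * n ^ (ε / 2) := rpow_div_four_le_mul_rpow_div_two hε0 hc hnN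
      _ ≤ θ := hθ
      _ ≤ G.degIn T v := (hdeg v hv).1
      _ ≤ #T := by exact_mod_cast G.degIn_le_card T v
  · obtain ⟨i, hi⟩ := exists_deg_eq_maxDeg G'
    obtain ⟨j, hj⟩ := exists_deg_eq_minDeg G'
    obtain ⟨u, hu, hiu⟩ := hdegG' i
    obtain ⟨w, hw, hjw⟩ := hdegG' j
    rw [← hi, ← hj, hiu, hjw]
    exact (hdeg u hu).2.trans (by gcongr; exact (hdeg w hw).1)
  · have h2 : ((2 * edgeCount G' : ℕ) : ℝ) = G.degSum T := by exact_mod_cast hedgeG'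
    push_cast at h2
    linarith

/-- Jiang–Seiver: a graph with `e(G) ≥ c n^{1+ε}` contains a
`K`-almost regular subgraph `G'` on `n' ≥ n^{ε/4}` vertices with `e(G') ≥ c' n'^{1+ε}`. -/
theorem stmt1 (ε c : ℝ) (hε0 : 0 < ε) (hε1 : ε ≤ 1) (hc : 0 < c) :
    ∃ (K c' : ℝ) (N : ℕ), 1 ≤ K ∧ 0 < c' ∧
      ∀ n : ℕ, N ≤ n → ∀ G : SimpleGraph (Fin n),
        c * (n : ℝ) ^ (1 + ε) ≤ (edgeCount G : ℝ) →
        ∃ (n' : ℕ) (G' : SimpleGraph (Fin n')), IsSubgraphOf G' G ∧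
          (n : ℝ) ^ (ε / 4) ≤ (n' : ℝ) ∧
          (maxDeg G' : ℝ) ≤ K * (minDeg G' : ℝ) ∧
          c' * (n' : ℝ) ^ (1 + ε) ≤ (edgeCount G' : ℝ) :=
  stmt1_general ε c hε0 hc
end

section
/- For every constant 0 < ξ ≤ 1/2 there is an integer N such that for every n ≥ N there exists an n-vertex simple graph G with spectral radius λ(G) ≥ (1/2)·n^{ξ} such that every subgraph of G is a forest; in particular, every subgraph of G on n' vertices has at most n'−1 edges. (One may take G = S_n^{ξ}, the graph obtained from the star K_{1,⌈n^{2ξ}⌉−1} by subdividing one of its edges n−⌈n^{2ξ}⌉ times.) -/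
/-!
The star `K_{1,n-1}` (the paper's `S_n^ξ` for `ξ = 1/2`) already works for every `ξ ≤ 1/2`.
It is a tree, so all its subgraphs are forests, and an acyclic graph on `m` vertices extends to a
spanning tree of `K_m`, hence has at most `m - 1` edges. The vector equal to `√(n-1)` at the
centre and `1` at the leaves is an eigenvector for `√(n-1) ≥ √n / 2 ≥ n^ξ / 2`.
-/

open SimpleGraph Finset Matrix

theorem SimpleGraph.IsAcyclic.card_edgeSet_add_one_le {V : Type*} [Finite V] [Nonempty V]
    {G : SimpleGraph V} (hG : G.IsAcyclic) : Nat.card G.edgeSet + 1 ≤ Nat.card V := by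
  obtain ⟨T, hGT, -, hT⟩ := connected_top.exists_isTree_le_of_le_of_isAcyclic le_top hG
  rw [← (isTree_iff_connected_and_card.1 hT).2]
  exact Nat.add_le_add_right (Nat.card_mono (Set.toFinite _) (edgeSet_mono hGT)) 1

theorem edgeCount_le_of_isAcyclic {m : ℕ} (hm : 1 ≤ m) {H : SimpleGraph (Fin m)}
    (hH : H.IsAcyclic) : edgeCount H ≤ m - 1 := by
  have : Nonempty (Fin m) := ⟨⟨0, hm⟩⟩
  have hcard := hH.card_edgeSet_add_one_le
  rw [Nat.card_fin] at hcard
  unfold edgeCount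
  omega

theorem IsSubgraphOf.isAcyclic {α β : Type*} {H : SimpleGraph α} {G : SimpleGraph β}
    (hHG : IsSubgraphOf H G) (hG : G.IsAcyclic) : H.IsAcyclic := by
  obtain ⟨f, hf⟩ := hHG
  exact hG.comap ⟨f, hf _ _⟩ f.injective

theorem adjMat_eq_adjMatrix {V : Type*} [Fintype V] (G : SimpleGraph V) [DecidableRel G.Adj] :
    adjMat G = G.adjMatrix ℝ := by
  unfold adjMat
  congr

theorem eigenvalue_le_card_of_mulVec_eq {V : Type*} [Fintype V] (G : SimpleGraph V) {μ : ℝ}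
    {x : V → ℝ} (hx : x ≠ 0) (hμ : adjMat G *ᵥ x = μ • x) : μ ≤ Fintype.card V := by
  classical
  obtain ⟨i, hi⟩ := Function.ne_iff.1 hx
  obtain ⟨k, -, hk⟩ := exists_max_image univ (fun j ↦ |x j|) ⟨i, mem_univ i⟩
  have hxk : 0 < |x k| := (abs_pos.2 hi).trans_le (hk i (mem_univ i))
  have hbound : |μ| * |x k| ≤ Fintype.card V * |x k| :=
    calc |μ| * |x k| = |∑ u ∈ G.neighborFinset k, x u| := by
          rw [← adjMatrix_mulVec_apply, ← adjMat_eq_adjMatrix, hμ, Pi.smul_apply, smul_eq_mul,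
            abs_mul]
      _ ≤ ∑ u ∈ G.neighborFinset k, |x u| := abs_sum_le_sum_abs _ _
      _ ≤ ∑ u ∈ G.neighborFinset k, |x k| := sum_le_sum fun u _ ↦ hk u (mem_univ u)
      _ ≤ Fintype.card V * |x k| := by
          rw [sum_const, nsmul_eq_mul]
          gcongr
          exact card_le_univ _
  exact (le_abs_self μ).trans (le_of_mul_le_mul_right hbound hxk)

-- `specRad` is an `sSup`, which is the junk value `0` unless the eigenvalues are bounded above.
theorem le_specRad_of_mulVec_eq {V : Type*} [Fintype V] (G : SimpleGraph V) {μ : ℝ}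
    {x : V → ℝ} (hx : x ≠ 0) (hμ : adjMat G *ᵥ x = μ • x) : μ ≤ specRad G :=
  le_csSup ⟨Fintype.card V, fun _ ⟨_, hy, hν⟩ ↦ eigenvalue_le_card_of_mulVec_eq G hy hν⟩
    ⟨x, hx, hμ⟩

section StarGraph

variable {V : Type*} [Fintype V] [DecidableEq V]

theorem neighborFinset_starGraph_self (r : V) :
    (starGraph r).neighborFinset r = univ.erase r := by
  ext u
  simp [eq_comm]

theorem neighborFinset_starGraph_of_ne {r v : V} (hv : v ≠ r) :
    (starGraph r).neighborFinset v = {r} := by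
  ext u
  simp only [mem_neighborFinset, starGraph_adj, mem_singleton]
  grind

noncomputable def starGraphEigenvector (r v : V) : ℝ :=
  if v = r then √(Fintype.card V - 1 : ℝ) else 1

theorem adjMat_starGraph_mulVec_eigenvector (r : V) :
    adjMat (starGraph r) *ᵥ starGraphEigenvector r =
      √(Fintype.card V - 1 : ℝ) • starGraphEigenvector r := by
  ext v
  rw [adjMat_eq_adjMatrix, adjMatrix_mulVec_apply, Pi.smul_apply, smul_eq_mul]
  simp only [starGraphEigenvector]
  by_cases hv : v = r
  · subst hv
    have : Nonempty V := ⟨v⟩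
    have hcard : (1 : ℝ) ≤ Fintype.card V := by exact_mod_cast Fintype.card_pos
    rw [neighborFinset_starGraph_self, sum_congr rfl fun u hu ↦ if_neg (ne_of_mem_erase hu),
      if_pos rfl, Real.mul_self_sqrt (by linarith), sum_const, card_erase_of_mem (mem_univ v),
      card_univ, nsmul_one, Nat.cast_pred Fintype.card_pos]
  · rw [neighborFinset_starGraph_of_ne hv, sum_singleton, if_pos rfl, if_neg hv, mul_one]

theorem sqrt_card_sub_one_le_specRad_starGraph [Nontrivial V] (r : V) :
    √(Fintype.card V - 1 : ℝ) ≤ specRad (starGraph r) := by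
  refine le_specRad_of_mulVec_eq _ (fun h ↦ ?_) (adjMat_starGraph_mulVec_eigenvector r)
  obtain ⟨v, hv⟩ := exists_ne r
  simpa [starGraphEigenvector, hv] using congrFun h v

end StarGraph

theorem half_mul_rpow_le_sqrt_sub_one {x ξ : ℝ} (hx : 4 / 3 ≤ x) (hξ : ξ ≤ 1 / 2) :
    1 / 2 * x ^ ξ ≤ √(x - 1) :=
  calc 1 / 2 * x ^ ξ ≤ 1 / 2 * √x := by
        rw [Real.sqrt_eq_rpow]
        gcongr
        linarith
    _ ≤ √(x - 1) := by
        rw [Real.le_sqrt (by positivity) (by linarith), mul_pow, Real.sq_sqrt (by positivity)]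
        linarith

theorem stmt4_general (ξ : ℝ) (hξ1 : ξ ≤ 1/2) :
    ∃ N : ℕ, ∀ n : ℕ, N ≤ n →
      ∃ G : SimpleGraph (Fin n),
        (1/2 : ℝ) * (n : ℝ) ^ ξ ≤ specRad G ∧
        (∀ (m : ℕ) (H : SimpleGraph (Fin m)), IsSubgraphOf H G → H.IsAcyclic) ∧
        (∀ m : ℕ, 1 ≤ m → ∀ H : SimpleGraph (Fin m), IsSubgraphOf H G →
          edgeCount H ≤ m - 1) := by
  refine ⟨2, fun n hn ↦ ?_⟩
  have : Nontrivial (Fin n) := Fin.nontrivial_iff_two_le.2 hn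
  let c : Fin n := ⟨0, by omega⟩
  have hacyclic (m : ℕ) (H : SimpleGraph (Fin m)) (hH : IsSubgraphOf H (starGraph c)) :
      H.IsAcyclic :=
    hH.isAcyclic (isAcyclic_starGraph c)
  refine ⟨starGraph c, ?_, hacyclic, fun m hm H hH ↦ edgeCount_le_of_isAcyclic hm
    (hacyclic m H hH)⟩
  have hn' : (4 / 3 : ℝ) ≤ n := by
    have : (2 : ℝ) ≤ n := by exact_mod_cast hn
    linarith
  calc 1 / 2 * (n : ℝ) ^ ξ ≤ √(n - 1) := half_mul_rpow_le_sqrt_sub_one hn' hξ1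
    _ = √(Fintype.card (Fin n) - 1) := by rw [Fintype.card_fin]
    _ ≤ specRad (starGraph c) := sqrt_card_sub_one_le_specRad_starGraph c

/-- for `0 < ξ ≤ 1/2` and large `n` there is an `n`-vertex graph with
`λ(G) ≥ (1/2) n^ξ` all of whose subgraphs are forests, hence every subgraph on
`n' ≥ 1` vertices has at most `n' - 1` edges. -/
theorem stmt4 (ξ : ℝ) (hξ0 : 0 < ξ) (hξ1 : ξ ≤ 1/2) :
    ∃ N : ℕ, ∀ n : ℕ, N ≤ n →
      ∃ G : SimpleGraph (Fin n),
        (1/2 : ℝ) * (n : ℝ) ^ ξ ≤ specRad G ∧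
        (∀ (m : ℕ) (H : SimpleGraph (Fin m)), IsSubgraphOf H G → H.IsAcyclic) ∧
        (∀ m : ℕ, 1 ≤ m → ∀ H : SimpleGraph (Fin m), IsSubgraphOf H G →
          edgeCount H ≤ m - 1) :=
  stmt4_general ξ hξ1
end

section
/- For every real number r with 0 < r < 1/2, there is no finite family of graphs 𝓗 such that spex(n,𝓗) = Θ(n^r). Equivalently, for every finite family 𝓗 of graphs, either spex(n,𝓗) = O(1) or spex(n,𝓗) = Ω(n^{1/2}) (in fact spex(n,𝓗) ≥ √(n−1) for all n in the latter case). -/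
open Finset Matrix Filter

lemma deg_le_card {V : Type*} [Finite V] (G : SimpleGraph V) (v : V) : deg G v ≤ Nat.card V :=
  Finite.card_subtype_le _

section Spectrum

variable {V : Type*} [Fintype V]

open Classical in
lemma adjMat_apply (G : SimpleGraph V) (v u : V) : adjMat G v u = if G.Adj v u then 1 else 0 :=
  rfl

lemma adjMat_apply_nonneg (G : SimpleGraph V) (v u : V) : 0 ≤ adjMat G v u := by
  rw [adjMat_apply]
  positivity

lemma sum_adjMat_row (G : SimpleGraph V) (v : V) : ∑ u, adjMat G v u = deg G v := by
  classical
  simp only [adjMat_apply, sum_boole, deg, Nat.card_eq_fintype_card,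
    SimpleGraph.card_neighborSet_eq_degree, ← SimpleGraph.card_neighborFinset_eq_degree,
    SimpleGraph.neighborFinset_eq_filter]

lemma exists_le_deg_of_mulVec_eq_smul {G : SimpleGraph V} {μ : ℝ} {x : V → ℝ} (hx : x ≠ 0)
    (hμ : adjMat G *ᵥ x = μ • x) : ∃ v, μ ≤ deg G v := by
  classical
  have hμ' : Module.End.HasEigenvalue (Matrix.toLin' (adjMat G)) μ :=
    Module.End.hasEigenvalue_of_hasEigenvector
      ⟨Module.End.mem_eigenspace_iff.mpr (by rwa [Matrix.toLin'_apply]), hx⟩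
  obtain ⟨v, hv⟩ := eigenvalue_mem_ball hμ'
  refine ⟨v, ?_⟩
  have hdiag : adjMat G v v = 0 := by simp [adjMat_apply]
  rw [Metric.mem_closedBall, hdiag, Real.dist_eq, sub_zero] at hv
  calc μ ≤ |μ| := le_abs_self μ
    _ ≤ ∑ u ∈ univ.erase v, ‖adjMat G v u‖ := hv
    _ = ∑ u, adjMat G v u := by
        rw [sum_erase _ (by simp [hdiag])]
        exact sum_congr rfl fun u _ => Real.norm_of_nonneg (adjMat_apply_nonneg G v u)
    _ = deg G v := sum_adjMat_row G v

lemma specRad_le_of_forall_deg_le {G : SimpleGraph V} {d : ℕ} (hd : ∀ v, deg G v ≤ d) :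
    specRad G ≤ d := by
  refine Real.sSup_le ?_ d.cast_nonneg
  rintro μ ⟨x, hx, hμ⟩
  obtain ⟨v, hv⟩ := exists_le_deg_of_mulVec_eq_smul hx hμ
  exact hv.trans (by exact_mod_cast hd v)

lemma specRad_le_card (G : SimpleGraph V) : specRad G ≤ Nat.card V :=
  specRad_le_of_forall_deg_le (deg_le_card G)

lemma le_specRad_of_mulVec_eq_smul {G : SimpleGraph V} {μ : ℝ} {x : V → ℝ} (hx : x ≠ 0)
    (hμ : adjMat G *ᵥ x = μ • x) : μ ≤ specRad G := by
  refine le_csSup ⟨Nat.card V, ?_⟩ ⟨x, hx, hμ⟩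
  rintro ν ⟨y, hy, hν⟩
  obtain ⟨v, hv⟩ := exists_le_deg_of_mulVec_eq_smul hy hν
  exact hv.trans (by exact_mod_cast deg_le_card G v)

end Spectrum

def starGraph (k : ℕ) : SimpleGraph (Fin (k + 1)) :=
  SimpleGraph.fromRel fun u _ => u = 0

lemma adjMat_starGraph_mulVec (k : ℕ) (x : Fin (k + 1) → ℝ) :
    adjMat (starGraph k) *ᵥ x = Fin.cons (∑ j : Fin k, x j.succ) fun _ => x 0 := by
  funext i
  refine Fin.cases ?_ (fun j => ?_) i <;>
    simp [mulVec, dotProduct, Fin.sum_univ_succ, adjMat_apply, starGraph, Fin.succ_ne_zero,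
      (Fin.succ_ne_zero _).symm]

lemma sqrt_le_specRad_starGraph (k : ℕ) : √k ≤ specRad (starGraph k) := by
  -- the eigenvector is `1` at the centre and `1/√k` at the leaves, so it is nonzero even if `k = 0`
  let x : Fin (k + 1) → ℝ := Fin.cons 1 fun _ => (√k)⁻¹
  have hx : x ≠ 0 := fun h => one_ne_zero (congrFun h 0)
  refine le_specRad_of_mulVec_eq_smul hx ?_
  rw [adjMat_starGraph_mulVec]
  funext i
  refine Fin.cases ?_ (fun j => ?_) i
  · simp [x, ← div_eq_mul_inv, Real.div_sqrt]
  · have hk : (0 : ℝ) < k := by exact_mod_cast j.pos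
    simp [x, (Real.sqrt_pos.mpr hk).ne']

lemma IsSubgraphOf.trans {α β γ : Type*} {A : SimpleGraph α} {B : SimpleGraph β}
    {C : SimpleGraph γ} (hAB : IsSubgraphOf A B) (hBC : IsSubgraphOf B C) : IsSubgraphOf A C := by
  obtain ⟨f, hf⟩ := hAB
  obtain ⟨g, hg⟩ := hBC
  exact ⟨f.trans g, fun u v h => hg _ _ (hf u v h)⟩

lemma isSubgraphOf_starGraph_of_le_deg {V : Type*} [Finite V] {G : SimpleGraph V} {v : V}
    {k : ℕ} (hk : k ≤ deg G v) : IsSubgraphOf (starGraph k) G := by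
  classical
  have := Fintype.ofFinite V
  obtain ⟨e⟩ : Nonempty (Fin k ↪ G.neighborSet v) :=
    Function.Embedding.nonempty_of_card_le (by rwa [Fintype.card_fin, ← Nat.card_eq_fintype_card])
  have hv : v ∉ Set.range fun j => (e j : V) := by
    rintro ⟨j, hj⟩
    exact G.ne_of_adj (e j).2 hj.symm
  refine ⟨⟨Fin.cons v fun j => e j, Fin.cons_injective_iff.mpr
    ⟨hv, Subtype.val_injective.comp e.injective⟩⟩, ?_⟩
  rintro a b ⟨hab, rfl | rfl⟩
  · obtain ⟨j, rfl⟩ := Fin.exists_succ_eq.mpr hab.symm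
    exact (e j).2
  · obtain ⟨j, rfl⟩ := Fin.exists_succ_eq.mpr hab
    exact (e j).2.symm

section spexNum

variable {𝓗 : Set (Σ m : ℕ, SimpleGraph (Fin m))} {n : ℕ}

lemma spexNum_le {C : ℝ} (hC : 0 ≤ C)
    (h : ∀ G : SimpleGraph (Fin n), HFree 𝓗 G → specRad G ≤ C) : spexNum 𝓗 n ≤ C :=
  Real.sSup_le (fun _ ⟨G, hG, hμ⟩ => hμ ▸ h G hG) hC

lemma specRad_le_spexNum {G : SimpleGraph (Fin n)} (hG : HFree 𝓗 G) :
    specRad G ≤ spexNum 𝓗 n := by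
  refine le_csSup ⟨n, ?_⟩ ⟨G, hG, rfl⟩
  rintro _ ⟨G', -, rfl⟩
  simpa using specRad_le_card G'

lemma spexNum_le_of_isSubgraphOf_starGraph {H : Σ m : ℕ, SimpleGraph (Fin m)} {k : ℕ}
    (hH : H ∈ 𝓗) (hHk : IsSubgraphOf H.2 (starGraph k)) : spexNum 𝓗 n ≤ k := by
  refine spexNum_le k.cast_nonneg fun G hG => specRad_le_of_forall_deg_le fun v => ?_
  by_contra! hv
  exact hG H hH (hHk.trans (isSubgraphOf_starGraph_of_le_deg hv.le))

lemma spexNum_bounded_or_sqrt_le (𝓗 : Set (Σ m : ℕ, SimpleGraph (Fin m))) :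
    (∃ C : ℝ, ∃ N : ℕ, ∀ n : ℕ, N ≤ n → spexNum 𝓗 n ≤ C) ∨
      ∀ n : ℕ, 1 ≤ n → √((n : ℝ) - 1) ≤ spexNum 𝓗 n := by
  by_cases hstar : ∃ k : ℕ, ∃ H ∈ 𝓗, IsSubgraphOf H.2 (starGraph k)
  · obtain ⟨k, H, hH, hHk⟩ := hstar
    exact Or.inl ⟨k, 0, fun n _ => spexNum_le_of_isSubgraphOf_starGraph hH hHk⟩
  · refine Or.inr fun n hn => ?_
    obtain ⟨k, rfl⟩ : ∃ k, n = k + 1 := ⟨n - 1, by omega⟩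
    calc √(((k + 1 : ℕ) : ℝ) - 1) = √k := by norm_num
      _ ≤ specRad (starGraph k) := sqrt_le_specRad_starGraph k
      _ ≤ spexNum 𝓗 (k + 1) := specRad_le_spexNum fun H hH hsub => hstar ⟨k, H, hH, hsub⟩

end spexNum

lemma exists_lt_mul_rpow {r C₁ : ℝ} (hr : 0 < r) (hC₁ : 0 < C₁) (C : ℝ) (N : ℕ) :
    ∃ n : ℕ, N ≤ n ∧ C < C₁ * (n : ℝ) ^ r := by
  have hgrow := ((tendsto_rpow_atTop hr).comp tendsto_natCast_atTop_atTop).const_mul_atTop hC₁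
  exact ((eventually_ge_atTop N).and (hgrow.eventually_gt_atTop C)).exists

lemma sqrt_le_sqrt_two_mul_sqrt_sub_one {x : ℝ} (hx : 2 ≤ x) : √x ≤ √2 * √(x - 1) := by
  rw [← Real.sqrt_mul zero_le_two]
  exact Real.sqrt_le_sqrt (by linarith)

lemma exists_mul_rpow_lt_sqrt_sub_one {r : ℝ} (hr : r < 1 / 2) (C : ℝ) (N : ℕ) :
    ∃ n : ℕ, N ≤ n ∧ C * (n : ℝ) ^ r < √((n : ℝ) - 1) := by
  have hgrow := (tendsto_rpow_atTop (sub_pos.mpr hr)).comp tendsto_natCast_atTop_atTop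
  obtain ⟨n, hn, hCn⟩ := ((eventually_ge_atTop (max N 2)).and
    (hgrow.eventually_gt_atTop (√2 * C))).exists
  have hn2 : (2 : ℝ) ≤ n := by exact_mod_cast (le_max_right N 2).trans hn
  have hnr : 0 < (n : ℝ) ^ r := Real.rpow_pos_of_pos (by linarith) r
  refine ⟨n, (le_max_left N 2).trans hn, ?_⟩
  have hsqrt : √(n : ℝ) = (n : ℝ) ^ r * (n : ℝ) ^ (1 / 2 - r) := by
    rw [Real.sqrt_eq_rpow, ← Real.rpow_add (by linarith)]
    ring_nf
  have h2 : (0 : ℝ) < √2 := by positivity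
  have hscaled : √2 * (C * (n : ℝ) ^ r) < √2 * √((n : ℝ) - 1) :=
    calc √2 * (C * (n : ℝ) ^ r) = (n : ℝ) ^ r * (√2 * C) := by ring
      _ < (n : ℝ) ^ r * (n : ℝ) ^ (1 / 2 - r) := mul_lt_mul_of_pos_left hCn hnr
      _ = √(n : ℝ) := hsqrt.symm
      _ ≤ √2 * √((n : ℝ) - 1) := sqrt_le_sqrt_two_mul_sqrt_sub_one hn2
  exact lt_of_mul_lt_mul_left hscaled h2.le

theorem stmt9_general (𝓗 : Set (Σ m : ℕ, SimpleGraph (Fin m))) :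
    (∀ r : ℝ, 0 < r → r < 1/2 →
      ¬ ∃ C₁ C₂ : ℝ, ∃ N : ℕ, 0 < C₁ ∧ C₁ ≤ C₂ ∧
        ∀ n : ℕ, N ≤ n →
          C₁ * (n : ℝ) ^ r ≤ spexNum 𝓗 n ∧ spexNum 𝓗 n ≤ C₂ * (n : ℝ) ^ r) ∧
    ((∃ C : ℝ, ∃ N : ℕ, ∀ n : ℕ, N ≤ n → spexNum 𝓗 n ≤ C) ∨
      (∀ n : ℕ, 1 ≤ n → Real.sqrt ((n : ℝ) - 1) ≤ spexNum 𝓗 n)) := by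
  refine ⟨?_, spexNum_bounded_or_sqrt_le 𝓗⟩
  rintro r hr hr2 ⟨C₁, C₂, N, hC₁, -, hΘ⟩
  rcases spexNum_bounded_or_sqrt_le 𝓗 with ⟨C, N', hC⟩ | hsqrt
  · obtain ⟨n, hn, hlt⟩ := exists_lt_mul_rpow hr hC₁ C (max N N')
    have hlower := (hΘ n ((le_max_left N N').trans hn)).1
    linarith [hC n ((le_max_right N N').trans hn)]
  · obtain ⟨n, hn, hlt⟩ := exists_mul_rpow_lt_sqrt_sub_one hr2 C₂ (max N 1)
    have hupper := (hΘ n ((le_max_left N 1).trans hn)).2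
    linarith [hsqrt n ((le_max_right N 1).trans hn)]

/-- for `0 < r < 1/2` no finite family `𝓗` has `spex(n,𝓗) = Θ(n^r)`;
indeed for every finite `𝓗`, `spex(n,𝓗)` is either `O(1)` or at least `√(n-1)` for all `n ≥ 1`. -/
theorem stmt9 (𝓗 : Set (Σ m : ℕ, SimpleGraph (Fin m))) (h𝓗 : 𝓗.Finite) :
    (∀ r : ℝ, 0 < r → r < 1/2 →
      ¬ ∃ C₁ C₂ : ℝ, ∃ N : ℕ, 0 < C₁ ∧ C₁ ≤ C₂ ∧
        ∀ n : ℕ, N ≤ n →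
          C₁ * (n : ℝ) ^ r ≤ spexNum 𝓗 n ∧ spexNum 𝓗 n ≤ C₂ * (n : ℝ) ^ r) ∧
    ((∃ C : ℝ, ∃ N : ℕ, ∀ n : ℕ, N ≤ n → spexNum 𝓗 n ≤ C) ∨
      (∀ n : ℕ, 1 ≤ n → Real.sqrt ((n : ℝ) - 1) ≤ spexNum 𝓗 n)) :=
  stmt9_general 𝓗
end

section
/- Let 0 < ε ≤ 1/2 and c > 0, let G be an n-vertex simple graph with spectral radius λ = λ(G) ≥ c·n^{1/2+ε}, and let x be a nonnegative unit eigenvector of A(G) for λ. Set p = ⌈18^{(2−2ε)/ε}⌉ and η = 1/p², and let B₁ be a set of ⌈n/p⌉ vertices with the largest entries of x. If Σ_{v∈B₁} x_v² ≤ 1/2 − η, then the induced subgraph G − B₁ (on n' = n − ⌈n/p⌉ vertices) satisfies e(G − B₁) ≥ (2c/p³)·n^{3/2+ε}, and hence its average degree satisfies d(G − B₁) ≥ (4c/p³)·n'^{1/2+ε}. -/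
/-!
Let `S` be the complement of `B₁` and `W(T, U) = ∑_{u ∈ T, v ∈ U} A_{uv} x_u x_v`. The eigenvector
equation gives `W(T, V) = λ ∑_{u ∈ T} x_u²`, and by symmetry `W(S, B₁) = W(B₁, S) ≤ W(B₁, V)`, so
`W(S, S) ≥ λ (∑_S x² - ∑_{B₁} x²) ≥ 2λ/p²`. On the other hand `B₁` carries the largest entries, so
every `u ∉ B₁` has `x_u² ≤ (∑_{B₁} x²) / |B₁| ≤ p/(2n)`, whence `W(S, S) ≤ (p/(2n)) · 2 e(G - B₁)`.
Comparing the two bounds gives `2 λ n ≤ p³ e(G - B₁)`, and `λ ≥ c n^{1/2+ε}` finishes.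
-/

open Finset Matrix

theorem card_mul_sq_le_sum_sq_of_le {ι : Type*} {B : Finset ι} {x : ι → ℝ} {a : ℝ}
    (ha : 0 ≤ a) (h : ∀ u ∈ B, a ≤ x u) : #B * a ^ 2 ≤ ∑ u ∈ B, x u ^ 2 := by
  simpa [nsmul_eq_mul] using
    card_nsmul_le_sum B (fun u => x u ^ 2) (a ^ 2) fun u hu => pow_le_pow_left₀ ha (h u hu) 2

theorem mul_rpow_le_div_of_mul_rpow_add_one_le {a q s t E : ℝ} (ha : 0 ≤ a) (hq : 0 < q)
    (hs : 0 ≤ s) (hst : s ≤ t) (h : a * t ^ (q + 1) ≤ E) : a * s ^ q ≤ E / s := by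
  rcases hs.eq_or_lt with rfl | hs
  · simp [Real.zero_rpow hq.ne']
  rw [le_div_iff₀ hs]
  calc a * s ^ q * s = a * s ^ (q + 1) := by rw [Real.rpow_add_one hs.ne']; ring
    _ ≤ a * t ^ (q + 1) := by gcongr
    _ ≤ E := h

theorem Matrix.IsSymm.mul_sum_sq_sub_le_of_mulVec_eq_smul {V : Type*} [Fintype V] [DecidableEq V]
    {A : Matrix V V ℝ} (hA : A.IsSymm) (hA0 : ∀ i j, 0 ≤ A i j) {x : V → ℝ} (hx : 0 ≤ x)
    {μ : ℝ} (hAx : A *ᵥ x = μ • x) (S : Finset V) :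
    μ * (∑ u ∈ S, x u ^ 2 - ∑ u ∈ Sᶜ, x u ^ 2) ≤ ∑ u ∈ S, ∑ v ∈ S, A u v * (x u * x v) := by
  set w : Finset V → Finset V → ℝ := fun T U => ∑ u ∈ T, ∑ v ∈ U, A u v * (x u * x v)
  have hrow : ∀ T, w T univ = μ * ∑ u ∈ T, x u ^ 2 := fun T => by
    rw [mul_sum]
    refine sum_congr rfl fun u _ => ?_
    have hu : ∑ v, A u v * x v = μ * x u := by
      simpa [Matrix.mulVec, dotProduct] using congrFun hAx u
    calc ∑ v, A u v * (x u * x v) = x u * ∑ v, A u v * x v := by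
          rw [mul_sum]; exact sum_congr rfl fun v _ => by ring
      _ = μ * x u ^ 2 := by rw [hu]; ring
  have hsplit : w S univ = w S S + w S Sᶜ :=
    (sum_congr rfl fun u _ => (sum_add_sum_compl S _).symm).trans sum_add_distrib
  have hcomm : w S Sᶜ = w Sᶜ S := by
    simp only [w]
    rw [sum_comm]
    refine sum_congr rfl fun u _ => sum_congr rfl fun v _ => ?_
    rw [hA.apply v u, mul_comm (x v)]
  have hmono : w Sᶜ S ≤ w Sᶜ univ :=
    sum_le_sum fun u _ => sum_le_sum_of_subset_of_nonneg (subset_univ S)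
      fun v _ _ => mul_nonneg (hA0 u v) (mul_nonneg (hx u) (hx v))
  have hS := hrow S
  have hSc := hrow Sᶜ
  change μ * _ ≤ w S S
  linarith

theorem SimpleGraph.sum_sum_adjMatrix_eq_two_mul_edgeCount_induce {V : Type*} [Fintype V]
    (G : SimpleGraph V) [DecidableRel G.Adj] (S : Finset V) :
    ∑ u ∈ S, ∑ v ∈ S, G.adjMatrix ℝ u v = 2 * (edgeCount (G.induce (S : Set V)) : ℝ) := by
  set H := G.induce (S : Set V)
  have hdeg : ∀ u : (S : Set V), ∑ v ∈ S, G.adjMatrix ℝ u v = H.degree u := by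
    intro u
    rw [← sum_finset_coe]
    simp only [adjMatrix_apply, sum_boole, ← card_neighborFinset_eq_degree]
    congr 2; ext v; simp [H]
  rw [← sum_finset_coe, sum_congr rfl fun u _ => hdeg u, ← Nat.cast_sum,
    sum_degrees_eq_twice_card_edges, edgeCount, Nat.card_eq_fintype_card, edgeFinset_card]
  push_cast; ring

theorem SimpleGraph.sum_sum_adjMatrix_mul_le {V : Type*} [Fintype V]
    (G : SimpleGraph V) [DecidableRel G.Adj] {x : V → ℝ} {M : ℝ} (S : Finset V)
    (hM : ∀ u ∈ S, x u ^ 2 ≤ M) :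
    ∑ u ∈ S, ∑ v ∈ S, G.adjMatrix ℝ u v * (x u * x v)
      ≤ M * (2 * (edgeCount (G.induce (S : Set V)) : ℝ)) := by
  rw [← G.sum_sum_adjMatrix_eq_two_mul_edgeCount_induce S, mul_sum]
  refine sum_le_sum fun u hu => ?_
  rw [mul_sum]
  refine sum_le_sum fun v hv => ?_
  have hxx : x u * x v ≤ M := by nlinarith [hM u hu, hM v hv, sq_nonneg (x u - x v)]
  by_cases h : G.Adj u v <;> simp [adjMatrix_apply, h, hxx]

theorem SimpleGraph.two_mul_mul_card_le_pow_three_mul_edgeCount_induce_compl {V : Type*}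
    [Fintype V] (G : SimpleGraph V) {x : V → ℝ} (hx0 : 0 ≤ x)
    (hx1 : ∑ v, x v ^ 2 = 1) {μ : ℝ} (hμ : 0 ≤ μ) (heig : adjMat G *ᵥ x = μ • x)
    {p : ℝ} (hp : 0 < p) {B : Finset V} (hBcard : Fintype.card V / p ≤ #B)
    (hBtop : ∀ u ∈ B, ∀ v ∉ B, x v ≤ x u) (hsum : ∑ v ∈ B, x v ^ 2 ≤ 1 / 2 - 1 / p ^ 2) :
    2 * μ * Fintype.card V ≤ p ^ 3 * edgeCount (G.induce (B : Set V)ᶜ) := by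
  classical
  set N : ℝ := (Fintype.card V : ℝ)
  have hN : 0 < N := by
    have : Nonempty V := by
      by_contra h
      rw [not_nonempty_iff] at h
      simp at hx1
    exact Nat.cast_pos.mpr Fintype.card_pos
  have hp2 : 0 < 1 / p ^ 2 := by positivity
  have hcompl_sum : ∑ v ∈ Bᶜ, x v ^ 2 = 1 - ∑ v ∈ B, x v ^ 2 := by
    rw [← hx1, ← sum_add_sum_compl B]; ring
  have hlow : μ * (2 / p ^ 2) ≤ ∑ u ∈ Bᶜ, ∑ v ∈ Bᶜ, G.adjMatrix ℝ u v * (x u * x v) := by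
    have h := (G.isSymm_adjMatrix (α := ℝ)).mul_sum_sq_sub_le_of_mulVec_eq_smul
      (fun i j => by by_cases h : G.Adj i j <;> simp [adjMatrix_apply, h]) hx0 heig Bᶜ
    rw [compl_compl] at h
    calc μ * (2 / p ^ 2) ≤ μ * (1 - 2 * ∑ v ∈ B, x v ^ 2) :=
          mul_le_mul_of_nonneg_left (by rw [div_eq_mul_one_div 2]; linarith) hμ
      _ = μ * (∑ v ∈ Bᶜ, x v ^ 2 - ∑ v ∈ B, x v ^ 2) := by rw [hcompl_sum]; ring
      _ ≤ _ := h
  have hsmall : ∀ u ∈ Bᶜ, x u ^ 2 ≤ p / (2 * N) := by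
    intro u hu
    have htop := card_mul_sq_le_sum_sq_of_le (hx0 u) fun v hv => hBtop v hv u (mem_compl.1 hu)
    have h : N / p * x u ^ 2 ≤ 1 / 2 :=
      (mul_le_mul_of_nonneg_right hBcard (sq_nonneg _)).trans (by linarith)
    rw [le_div_iff₀ (by positivity)]
    rw [div_mul_eq_mul_div, div_le_iff₀ hp] at h
    linarith
  have hup := G.sum_sum_adjMatrix_mul_le Bᶜ hsmall
  rw [coe_compl] at hup
  calc 2 * μ * N = μ * (2 / p ^ 2) * (p ^ 2 * N) := by field_simp
    _ ≤ p / (2 * N) * (2 * edgeCount (G.induce (B : Set V)ᶜ)) * (p ^ 2 * N) :=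
        mul_le_mul_of_nonneg_right (hlow.trans hup) (by positivity)
    _ = p ^ 3 * edgeCount (G.induce (B : Set V)ᶜ) := by field_simp

theorem stmt11_general (ε c : ℝ) (hε0 : 0 < ε) (hc : 0 < c)
    {n : ℕ} (G : SimpleGraph (Fin n)) (x : Fin n → ℝ)
    (hx0 : ∀ v, 0 ≤ x v) (hx1 : ∑ v, x v ^ 2 = 1)
    (hlam : c * (n : ℝ) ^ ((1:ℝ)/2 + ε) ≤ specRad G)
    (heig : (adjMat G).mulVec x = specRad G • x)
    (p : ℕ) (hp : p = ⌈(18 : ℝ) ^ ((2 - 2 * ε) / ε)⌉₊)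
    (B₁ : Finset (Fin n)) (hB₁card : B₁.card = ⌈(n : ℝ) / (p : ℝ)⌉₊)
    (hB₁top : ∀ u ∈ B₁, ∀ v ∉ B₁, x v ≤ x u)
    (hsum : ∑ v ∈ B₁, x v ^ 2 ≤ 1/2 - 1 / (p : ℝ) ^ 2) :
    (2 * c / (p : ℝ) ^ 3) * (n : ℝ) ^ ((3:ℝ)/2 + ε) ≤
        (edgeCount (G.induce ((B₁ : Set (Fin n))ᶜ)) : ℝ) ∧
    (4 * c / (p : ℝ) ^ 3) * ((n - ⌈(n : ℝ) / (p : ℝ)⌉₊ : ℕ) : ℝ) ^ ((1:ℝ)/2 + ε) ≤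
        avgDeg (G.induce ((B₁ : Set (Fin n))ᶜ)) := by
  have hp0 : (0 : ℝ) < p := by rw [hp]; exact_mod_cast Nat.ceil_pos.mpr (by positivity)
  have hρ : 0 ≤ specRad G := (by positivity : (0 : ℝ) ≤ _).trans hlam
  have key := G.two_mul_mul_card_le_pow_three_mul_edgeCount_induce_compl hx0 hx1 hρ heig hp0
    (by rw [Fintype.card_fin, hB₁card]; exact Nat.le_ceil _) hB₁top hsum
  rw [Fintype.card_fin] at key
  have hexp : (3 : ℝ) / 2 + ε = 1 / 2 + ε + 1 := by ring
  have hedges : (2 * c / (p : ℝ) ^ 3) * (n : ℝ) ^ ((3:ℝ)/2 + ε) ≤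
      (edgeCount (G.induce ((B₁ : Set (Fin n))ᶜ)) : ℝ) :=
    calc (2 * c / (p : ℝ) ^ 3) * (n : ℝ) ^ ((3:ℝ)/2 + ε)
        = 2 * (c * (n : ℝ) ^ ((1:ℝ)/2 + ε)) * n / (p : ℝ) ^ 3 := by
          rw [hexp, Real.rpow_add_one' (Nat.cast_nonneg n) (by positivity)]; ring
      _ ≤ 2 * specRad G * n / (p : ℝ) ^ 3 := by gcongr
      _ ≤ _ := by rw [div_le_iff₀ (by positivity)]; linarith
  refine ⟨hedges, ?_⟩
  rw [avgDeg, ← coe_compl B₁, Nat.card_coe_set_eq, Set.ncard_coe_finset, card_compl,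
    Fintype.card_fin, hB₁card, coe_compl]
  refine mul_rpow_le_div_of_mul_rpow_add_one_le (by positivity) (by positivity) (Nat.cast_nonneg _)
    (Nat.cast_le.mpr (Nat.sub_le n _)) ?_
  rw [← hexp]
  calc 4 * c / (p : ℝ) ^ 3 * (n : ℝ) ^ ((3 : ℝ) / 2 + ε)
      = 2 * (2 * c / (p : ℝ) ^ 3 * (n : ℝ) ^ ((3 : ℝ) / 2 + ε)) := by ring
    _ ≤ _ := by gcongr

/-- type 1 case: if the top `⌈n/p⌉` entries of the Perron eigenvector
carry total weight at most `1/2 - η`, then deleting them leaves many edges. -/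
theorem stmt11 (ε c : ℝ) (hε0 : 0 < ε) (hε1 : ε ≤ 1/2) (hc : 0 < c)
    {n : ℕ} (G : SimpleGraph (Fin n)) (x : Fin n → ℝ)
    (hx0 : ∀ v, 0 ≤ x v) (hx1 : ∑ v, x v ^ 2 = 1)
    (hlam : c * (n : ℝ) ^ ((1:ℝ)/2 + ε) ≤ specRad G)
    (heig : (adjMat G).mulVec x = specRad G • x)
    (p : ℕ) (hp : p = ⌈(18 : ℝ) ^ ((2 - 2 * ε) / ε)⌉₊)
    (B₁ : Finset (Fin n)) (hB₁card : B₁.card = ⌈(n : ℝ) / (p : ℝ)⌉₊)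
    (hB₁top : ∀ u ∈ B₁, ∀ v ∉ B₁, x v ≤ x u)
    (hsum : ∑ v ∈ B₁, x v ^ 2 ≤ 1/2 - 1 / (p : ℝ) ^ 2) :
    (2 * c / (p : ℝ) ^ 3) * (n : ℝ) ^ ((3:ℝ)/2 + ε) ≤
        (edgeCount (G.induce ((B₁ : Set (Fin n))ᶜ)) : ℝ) ∧
    (4 * c / (p : ℝ) ^ 3) * ((n - ⌈(n : ℝ) / (p : ℝ)⌉₊ : ℕ) : ℝ) ^ ((1:ℝ)/2 + ε) ≤
        avgDeg (G.induce ((B₁ : Set (Fin n))ᶜ)) :=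
  stmt11_general ε c hε0 hc G x hx0 hx1 hlam heig p hp B₁ hB₁card hB₁top hsum
end
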